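/- arXiv:2505.21748 — 4 statements merged into one kernel-verified Lean document; each statement's English description precedes it below -/
import Mathlib

section
/- Let N, C, K be positive integers with C ≤ K ≤ N. Let Θ, Θ' : Fin N → Fin C → ℝ be matrices, with the columns of Θ linearly independent (Θ has rank C), and let W, W' : Fin C → Fin K → ℝ be matrices whose first C columns form the C×C identity matrix, i.e. W c k = (if (k : ℕ) = (c : ℕ) then 1 else 0) for all k with (k : ℕ) < C, and similarly for W'. If the matrix products satisfy Θ * W = Θ' * W' (entrywise: Σ_c Θ i c * W c k = Σ_c Θ' i c * W' c k for all i, k), then Θ = Θ' and W = W'. -/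
/-- Injectivity of `(Θ, W) ↦ ΘW` when `W` is separable (its first `C` columns
form the identity matrix) and `Θ` has full column rank. -/
theorem separable_factorization_injective
    (N C K : ℕ) (hN : 0 < N) (hC : 0 < C) (hCK : C ≤ K) (hKN : K ≤ N)
    (Θ Θ' : Fin N → Fin C → ℝ)
    (hΘrank : LinearIndependent ℝ (fun c : Fin C => (fun i => Θ i c : Fin N → ℝ)))
    (W W' : Fin C → Fin K → ℝ)
    (hW : ∀ (c : Fin C) (k : Fin K), (k : ℕ) < C →
      W c k = if (k : ℕ) = (c : ℕ) then 1 else 0)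
    (hW' : ∀ (c : Fin C) (k : Fin K), (k : ℕ) < C →
      W' c k = if (k : ℕ) = (c : ℕ) then 1 else 0)
    (hprod : ∀ (i : Fin N) (k : Fin K),
      ∑ c : Fin C, Θ i c * W c k = ∑ c : Fin C, Θ' i c * W' c k) :
    Θ = Θ' ∧ W = W' := by
  have hcol : ∀ (M : Fin C → Fin K → ℝ),
      (∀ (c : Fin C) (k : Fin K), (k : ℕ) < C →
        M c k = if (k : ℕ) = (c : ℕ) then 1 else 0) →
      ∀ (i : Fin N) (A : Fin N → Fin C → ℝ) (c : Fin C),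
        ∑ c' : Fin C, A i c' * M c' ⟨c, c.2.trans_le hCK⟩ = A i c := by
    intro M hM i A c
    have h1 : ∀ c' : Fin C, A i c' * M c' ⟨c, c.2.trans_le hCK⟩
        = if c' = c then A i c' else 0 := by
      intro c'
      rw [hM c' ⟨c, c.2.trans_le hCK⟩ c.2]
      by_cases h : c' = c
      · subst h; simp
      · have hne : (c : ℕ) ≠ (c' : ℕ) := fun hh => h (Fin.ext hh.symm)
        simp [hne, h]
    simp only [h1, Finset.sum_ite_eq', Finset.mem_univ, if_true]
  have hΘeq : Θ = Θ' := by
    funext i c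
    have := hprod i ⟨c, c.2.trans_le hCK⟩
    rwa [hcol W hW i Θ c, hcol W' hW' i Θ' c] at this
  refine ⟨hΘeq, ?_⟩
  subst hΘeq
  funext c k
  have key := linearIndependent_iff'.mp hΘrank Finset.univ
    (fun c => W c k - W' c k) ?_ c (Finset.mem_univ c)
  · simpa [sub_eq_zero] using key
  · funext i
    have := hprod i k
    simp only [Finset.sum_apply, Pi.smul_apply, smul_eq_mul, Pi.zero_apply, sub_mul,
      Finset.sum_sub_distrib, sub_eq_zero]
    simpa [mul_comm] using this
end

section
/- Let d ≥ 3 and let N, C be positive integers with C ≥ 2. Let Θ, Θ' : Fin N → Fin C → ℝ be entrywise nonnegative matrices whose columns are linearly independent and whose columns each have ℓ1-norm 1 (Σ_i Θ i c = 1 and Σ_i Θ' i c = 1 for all c), and let γ, γ' : Fin C → ℝ with γ c > 0 and γ' c > 0 for all c. If for every tuple i : Fin d → Fin N one has Σ_{c} γ c * ∏_{r : Fin d} Θ (i r) c = Σ_{c} γ' c * ∏_{r : Fin d} Θ' (i r) c, then there exists a permutation π of Fin C such that for all i and c, Θ' i c = Θ i (π c) and γ' c = γ (π c). -/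
private lemma saun_exists_dual (N C : ℕ) (Θ : Fin N → Fin C → ℝ)
    (hli : LinearIndependent ℝ (fun c : Fin C => (fun i => Θ i c : Fin N → ℝ))) :
    ∃ u : Fin C → Fin N → ℝ,
      ∀ a c, (∑ k : Fin N, u a k * Θ k c) = if c = a then 1 else 0 := by
  classical
  let G : (Fin C → ℝ) →ₗ[ℝ] (Fin N → ℝ) :=
    { toFun := fun v => ∑ c : Fin C, v c • (fun i => Θ i c)
      map_add' := fun v w => by
        simp [add_smul, Finset.sum_add_distrib]
      map_smul' := fun r v => by
        simp [smul_smul, Finset.smul_sum] }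
  have hker : LinearMap.ker G = ⊥ := by
    rw [LinearMap.ker_eq_bot']
    intro v hv
    have h := Fintype.linearIndependent_iff.mp hli v hv
    funext c; exact h c
  obtain ⟨L, hL⟩ := G.exists_leftInverse_of_injective hker
  refine ⟨fun a j => L (fun i => if j = i then 1 else 0) a, fun a c => ?_⟩
  have h1 : (fun i => Θ i c) = ∑ j : Fin N, Θ j c • (fun i => if j = i then (1:ℝ) else 0) :=
    pi_eq_sum_univ _
  have h2 : L (fun i => Θ i c) a
      = ∑ j : Fin N, Θ j c * L (fun i => if j = i then (1:ℝ) else 0) a := by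
    conv_lhs => rw [h1]
    rw [map_sum]
    simp [Finset.sum_apply]
  have h3 : G (fun b => if c = b then (1:ℝ) else 0) = fun i => Θ i c := by
    show (∑ b : Fin C, (if c = b then (1:ℝ) else 0) • (fun i => Θ i b)) = _
    rw [Finset.sum_eq_single c]
    · simp
    · intro b _ hb; simp [Ne.symm hb]
    · simp
  have h4 : L (fun i => Θ i c) = fun b => if c = b then (1:ℝ) else 0 := by
    rw [← h3]
    have := congrArg (fun f => f (fun b => if c = b then (1:ℝ) else 0)) hL
    simpa using this
  calc (∑ j : Fin N, L (fun i => if j = i then (1:ℝ) else 0) a * Θ j c)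
      = ∑ j : Fin N, Θ j c * L (fun i => if j = i then (1:ℝ) else 0) a := by
        exact Finset.sum_congr rfl fun j _ => mul_comm _ _
    _ = L (fun i => Θ i c) a := h2.symm
    _ = if c = a then 1 else 0 := by rw [h4]

private lemma saun_ml (d N C : ℕ) (Θ Θ' : Fin N → Fin C → ℝ) (γ γ' : Fin C → ℝ)
    (heq : ∀ i : Fin d → Fin N,
      ∑ c : Fin C, γ c * ∏ r : Fin d, Θ (i r) c
        = ∑ c : Fin C, γ' c * ∏ r : Fin d, Θ' (i r) c)
    (x : Fin d → Fin N → ℝ) :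
    ∑ c : Fin C, γ c * ∏ r : Fin d, (∑ j : Fin N, x r j * Θ j c)
      = ∑ c : Fin C, γ' c * ∏ r : Fin d, (∑ j : Fin N, x r j * Θ' j c) := by
  classical
  have key : ∀ (M : Fin N → Fin C → ℝ) (g : Fin C → ℝ),
      ∑ c : Fin C, g c * ∏ r : Fin d, (∑ j : Fin N, x r j * M j c)
        = ∑ i ∈ Fintype.piFinset (fun _ : Fin d => (Finset.univ : Finset (Fin N))),
            (∏ r : Fin d, x r (i r)) * (∑ c : Fin C, g c * ∏ r : Fin d, M (i r) c) := by
    intro M g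
    have h1 : ∀ c : Fin C, ∏ r : Fin d, (∑ j : Fin N, x r j * M j c)
        = ∑ i ∈ Fintype.piFinset (fun _ : Fin d => (Finset.univ : Finset (Fin N))),
            (∏ r : Fin d, x r (i r)) * ∏ r : Fin d, M (i r) c := by
      intro c
      rw [Finset.prod_univ_sum]
      exact Finset.sum_congr rfl fun i _ => by rw [Finset.prod_mul_distrib]
    simp_rw [h1, Finset.mul_sum]
    rw [Finset.sum_comm]
    refine Finset.sum_congr rfl fun i _ => ?_
    exact Finset.sum_congr rfl fun c _ => by ring
  rw [key Θ γ, key Θ' γ']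
  exact Finset.sum_congr rfl fun i _ => by rw [heq i]

private lemma saun_prod_cons {N : ℕ} (k : ℕ) (v1 v2 w : Fin N → ℝ) (f : Fin N → ℝ) :
    (∏ r : Fin (k+2), (∑ j : Fin N,
        (Fin.cons v1 (Fin.cons v2 fun _ => w) : Fin (k+2) → Fin N → ℝ) r j * f j))
      = (∑ j : Fin N, v1 j * f j) *
          ((∑ j : Fin N, v2 j * f j) * (∑ j : Fin N, w j * f j) ^ k) := by
  rw [Fin.prod_univ_succ, Fin.prod_univ_succ]
  simp [Finset.prod_const]

/-- Uniqueness of the strictly assortative hypergraph model, up to a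
permutation of the `C` classes, for `ℓ1`-normalized columns of `Θ`. -/
theorem strictly_assortative_uniqueness
    (d N C : ℕ) (hd : 3 ≤ d) (hN : 0 < N) (hC : 2 ≤ C)
    (Θ Θ' : Fin N → Fin C → ℝ)
    (hΘnn : ∀ i c, 0 ≤ Θ i c) (hΘ'nn : ∀ i c, 0 ≤ Θ' i c)
    (hΘli : LinearIndependent ℝ (fun c : Fin C => (fun i => Θ i c : Fin N → ℝ)))
    (hΘ'li : LinearIndependent ℝ (fun c : Fin C => (fun i => Θ' i c : Fin N → ℝ)))
    (hΘnorm : ∀ c : Fin C, ∑ i : Fin N, Θ i c = 1)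
    (hΘ'norm : ∀ c : Fin C, ∑ i : Fin N, Θ' i c = 1)
    (γ γ' : Fin C → ℝ) (hγ : ∀ c, 0 < γ c) (hγ' : ∀ c, 0 < γ' c)
    (heq : ∀ i : Fin d → Fin N,
      ∑ c : Fin C, γ c * ∏ r : Fin d, Θ (i r) c
        = ∑ c : Fin C, γ' c * ∏ r : Fin d, Θ' (i r) c) :
    ∃ π : Equiv.Perm (Fin C),
      (∀ (i : Fin N) (c : Fin C), Θ' i c = Θ i (π c)) ∧
      (∀ c : Fin C, γ' c = γ (π c)) := by
  classical
  obtain ⟨k, rfl⟩ : ∃ k, d = k + 2 := ⟨d - 2, by omega⟩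
  have hk : k ≠ 0 := by omega
  obtain ⟨u, hu⟩ := saun_exists_dual N C Θ hΘli
  obtain ⟨u', hu'⟩ := saun_exists_dual N C Θ' hΘ'li
  -- the key bilinear identity, obtained by plugging `v1, v2, u' b, …, u' b`
  -- into the multilinearized form of `heq`
  have key : ∀ (v1 v2 : Fin N → ℝ) (b : Fin C),
      (∑ c : Fin C, γ c * ((∑ j : Fin N, v1 j * Θ j c) *
          ((∑ j : Fin N, v2 j * Θ j c) * (∑ j : Fin N, u' b j * Θ j c) ^ k)))
        = γ' b * ((∑ j : Fin N, v1 j * Θ' j b) * (∑ j : Fin N, v2 j * Θ' j b)) := by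
    intro v1 v2 b
    have H := saun_ml (k+2) N C Θ Θ' γ γ' heq (Fin.cons v1 (Fin.cons v2 fun _ => u' b))
    simp only [saun_prod_cons] at H
    rw [H]
    simp_rw [hu']
    simp [apply_ite (· ^ k), zero_pow hk, mul_ite, mul_zero, mul_one]
  -- pairing with indicator vectors
  have pair_e : ∀ (i : Fin N) (f : Fin N → ℝ),
      (∑ j : Fin N, (if i = j then (1:ℝ) else 0) * f j) = f i := by
    intro i f
    simp [ite_mul, Finset.sum_ite_eq]
  have hA : ∀ (b : Fin C) (i j : Fin N),
      (∑ c : Fin C, γ c * (Θ i c * (Θ j c * (∑ l : Fin N, u' b l * Θ l c) ^ k)))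
        = γ' b * (Θ' i b * Θ' j b) := by
    intro b i j
    have h := key (fun j' => if i = j' then (1:ℝ) else 0)
      (fun j' => if j = j' then (1:ℝ) else 0) b
    simp only [pair_e] at h
    exact h
  have hB : ∀ b a a' : Fin C,
      (if a = a' then γ a * (∑ l : Fin N, u' b l * Θ l a) ^ k else 0)
        = γ' b * ((∑ j : Fin N, u a j * Θ' j b) * (∑ j : Fin N, u a' j * Θ' j b)) := by
    intro b a a'
    have h := key (u a) (u a') b
    rw [← h]
    simp_rw [hu]
    simp only [ite_mul, one_mul, zero_mul, mul_ite, mul_zero, mul_one]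
    rw [Finset.sum_ite_eq' Finset.univ a'
      (fun c => if c = a then γ c * (∑ j : Fin N, u' b j * Θ j c) ^ k else 0)]
    by_cases hh : a = a'
    · subst hh; simp
    · simp [hh, Ne.symm hh]
  -- for each b, find the matching class a
  have main : ∀ b : Fin C, ∃ a : Fin C, (∀ i, Θ' i b = Θ i a) ∧ γ' b = γ a := by
    intro b
    obtain ⟨j0, hj0⟩ : ∃ j0, Θ' j0 b ≠ 0 := by
      by_contra h
      push_neg at h
      have h1 := hΘ'norm b
      simp only [h] at h1
      simp at h1
    have hD : γ' b * Θ' j0 b ≠ 0 := mul_ne_zero (ne_of_gt (hγ' b)) hj0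
    set s : Fin C → ℝ :=
      fun c => γ c * (Θ j0 c * (∑ l : Fin N, u' b l * Θ l c) ^ k) / (γ' b * Θ' j0 b)
      with hs
    have hspan : ∀ i, Θ' i b = ∑ c : Fin C, s c * Θ i c := by
      intro i
      have h := hA b i j0
      have h2 : (∑ c : Fin C, s c * Θ i c) * (γ' b * Θ' j0 b)
          = Θ' i b * (γ' b * Θ' j0 b) := by
        rw [Finset.sum_mul]
        calc (∑ c : Fin C, s c * Θ i c * (γ' b * Θ' j0 b))
            = ∑ c : Fin C, γ c * (Θ i c * (Θ j0 c * (∑ l : Fin N, u' b l * Θ l c) ^ k)) := by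
              refine Finset.sum_congr rfl fun c _ => ?_
              rw [hs]
              have hγb : γ' b ≠ 0 := ne_of_gt (hγ' b)
              field_simp
          _ = γ' b * (Θ' i b * Θ' j0 b) := h
          _ = Θ' i b * (γ' b * Θ' j0 b) := by ring
      exact (mul_right_cancel₀ hD h2).symm
    have hτ : ∀ a : Fin C, (∑ j : Fin N, u a j * Θ' j b) = s a := by
      intro a
      calc (∑ j : Fin N, u a j * Θ' j b)
          = ∑ j : Fin N, ∑ c : Fin C, s c * (u a j * Θ j c) := by
            refine Finset.sum_congr rfl fun j _ => ?_
            rw [hspan j, Finset.mul_sum]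
            exact Finset.sum_congr rfl fun c _ => by ring
        _ = ∑ c : Fin C, s c * ∑ j : Fin N, u a j * Θ j c := by
            rw [Finset.sum_comm]
            exact Finset.sum_congr rfl fun c _ => (Finset.mul_sum _ _ _).symm
        _ = s a := by
            simp_rw [hu]
            simp [mul_ite, Finset.sum_ite_eq']
    have hsum : (∑ c : Fin C, s c) = 1 := by
      calc (∑ c : Fin C, s c)
          = ∑ c : Fin C, s c * ∑ i : Fin N, Θ i c := by
            refine Finset.sum_congr rfl fun c _ => by rw [hΘnorm c, mul_one]
        _ = ∑ c : Fin C, ∑ i : Fin N, s c * Θ i c := by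
            exact Finset.sum_congr rfl fun c _ => (Finset.mul_sum _ _ _)
        _ = ∑ i : Fin N, ∑ c : Fin C, s c * Θ i c := Finset.sum_comm
        _ = ∑ i : Fin N, Θ' i b := Finset.sum_congr rfl fun i _ => (hspan i).symm
        _ = 1 := hΘ'norm b
    obtain ⟨a0, ha0⟩ : ∃ a0, s a0 ≠ 0 := by
      by_contra h
      push_neg at h
      rw [Finset.sum_congr rfl fun c _ => h c] at hsum
      simp at hsum
    have hzero : ∀ a : Fin C, a ≠ a0 → s a = 0 := by
      intro a ha
      have h := hB b a a0
      rw [if_neg ha, hτ a, hτ a0] at h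
      have h2 : s a * s a0 = 0 := by
        rcases mul_eq_zero.mp h.symm with h3 | h3
        · exact absurd h3 (ne_of_gt (hγ' b))
        · exact h3
      rcases mul_eq_zero.mp h2 with h3 | h3
      · exact h3
      · exact absurd h3 ha0
    have hone : s a0 = 1 := by
      rw [← hsum, Finset.sum_eq_single a0 (fun c _ hc => hzero c hc) (by simp)]
    have hΘeq : ∀ i, Θ' i b = Θ i a0 := by
      intro i
      rw [hspan i, Finset.sum_eq_single a0
        (fun c _ hc => by rw [hzero c hc, zero_mul]) (by simp), hone, one_mul]
    have hα : (∑ l : Fin N, u' b l * Θ l a0) = 1 := by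
      have : (∑ l : Fin N, u' b l * Θ l a0) = ∑ l : Fin N, u' b l * Θ' l b :=
        Finset.sum_congr rfl fun l _ => by rw [hΘeq l]
      rw [this, hu' b b, if_pos rfl]
    have hγeq : γ' b = γ a0 := by
      have h := hB b a0 a0
      rw [if_pos rfl, hτ a0, hone, hα, one_pow, one_mul, mul_one] at h
      linarith [h]
    exact ⟨a0, hΘeq, hγeq⟩
  choose σ hσ1 hσ2 using main
  have hinj : Function.Injective σ := by
    intro b b' hbb
    apply hΘ'li.injective
    funext i
    show Θ' i b = Θ' i b'
    rw [hσ1 b i, hσ1 b' i, hbb]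
  have hbij : Function.Bijective σ := Finite.injective_iff_bijective.mp hinj
  refine ⟨Equiv.ofBijective σ hbij, fun i c => ?_, fun c => ?_⟩
  · exact hσ1 c i
  · exact hσ2 c
end

section
/- Let d ≥ 1 and let N, C, K be positive integers with C ≤ K. Let γ : Fin K → ℝ, W : Fin C → Fin K → ℝ, Θ : Fin N → Fin C → ℝ, and set M i k = Σ_c Θ i c * W c k. Define the omniassortative rate tensor on tuples i : Fin d → Fin N by μ(i) = Σ over tuples c : Fin d → Fin C, Σ over k : Fin K, of (if ((k : ℕ) < C or c is non-constant) then γ k * ∏_{r : Fin d} (W (c r) k * Θ (i r) (c r)) else 0). Define γ̃ : Fin K → ℝ by γ̃ k = γ k − Σ over k' : Fin K with (k' : ℕ) ≥ C of γ k' * (W (the class with index (k : ℕ)) k')^d when (k : ℕ) < C, and γ̃ k = γ k when (k : ℕ) ≥ C; here for (k : ℕ) < C the first C columns of W are assumed to form the C×C identity matrix. Then for every tuple i : Fin d → Fin N, μ(i) = Σ_{k} γ̃ k * ∏_{r : Fin d} M (i r) k. -/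
/-- Reindexing a dite-sum over `Fin K` restricted to indices `< C` as a sum over `Fin C`. -/
lemma aux_dite_sum_fin {C K : ℕ} (hCK : C ≤ K) (h : Fin C → ℝ) :
    (∑ k : Fin K, if hk : (k : ℕ) < C then h ⟨(k : ℕ), hk⟩ else 0) = ∑ c₀ : Fin C, h c₀ := by
  have h2 : ∑ c₀ : Fin C, h c₀
      = ∑ n ∈ Finset.range C, if hk : n < C then h ⟨n, hk⟩ else 0 := by
    rw [← Fin.sum_univ_eq_sum_range (fun n => if hk : n < C then h ⟨n, hk⟩ else 0) C]
    refine Finset.sum_congr rfl fun c₀ _ => ?_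
    rw [dif_pos c₀.2]
  rw [Fin.sum_univ_eq_sum_range (fun n => if hk : n < C then h ⟨n, hk⟩ else 0) K, h2]
  exact (Finset.sum_subset (Finset.range_subset_range.2 hCK) (fun x _ hx =>
    dif_neg (by simpa using hx))).symm

/-- The omniassortative rate tensor admits an exact reparameterization as a
symmetric CP decomposition with factor matrix `M = ΘW` and modified weights
`γ̃`. -/
theorem omniassortative_cp_representation
    (d N C K : ℕ) (hd : 1 ≤ d) (hN : 0 < N) (hC : 0 < C) (hCK : C ≤ K)
    (γ : Fin K → ℝ) (W : Fin C → Fin K → ℝ) (Θ : Fin N → Fin C → ℝ)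
    (hWsep : ∀ (c : Fin C) (k : Fin K) (hk : (k : ℕ) < C),
      W c k = if (k : ℕ) = (c : ℕ) then 1 else 0)
    (M : Fin N → Fin K → ℝ)
    (hM : ∀ i k, M i k = ∑ c : Fin C, Θ i c * W c k)
    (μ : (Fin d → Fin N) → ℝ)
    (hμ : ∀ i : Fin d → Fin N,
      μ i = ∑ c : Fin d → Fin C, ∑ k : Fin K,
        if ((k : ℕ) < C ∨ ∃ r s : Fin d, c r ≠ c s) then
          γ k * ∏ r : Fin d, (W (c r) k * Θ (i r) (c r))
        else 0)
    (γt : Fin K → ℝ)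
    (hγt : ∀ k : Fin K, γt k =
      if hk : (k : ℕ) < C then
        γ k - ∑ k' ∈ Finset.univ.filter (fun k' : Fin K => C ≤ (k' : ℕ)),
          γ k' * (W ⟨(k : ℕ), hk⟩ k') ^ d
      else γ k)
    (i : Fin d → Fin N) :
    μ i = ∑ k : Fin K, γt k * ∏ r : Fin d, M (i r) k := by
  classical
  set r₀ : Fin d := ⟨0, hd⟩ with hr₀
  have hMsmall : ∀ (j : Fin N) (k : Fin K) (hk : (k : ℕ) < C),
      M j k = Θ j ⟨(k : ℕ), hk⟩ := by
    intro j k hk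
    rw [hM, Finset.sum_eq_single (⟨(k : ℕ), hk⟩ : Fin C)]
    · rw [hWsep _ _ hk]; simp
    · intro c _ hc
      rw [hWsep _ _ hk, if_neg, mul_zero]
      exact fun h => hc (Fin.ext h.symm)
    · simp
  set F : (Fin d → Fin C) → Fin K → ℝ :=
    fun c k => γ k * ∏ r : Fin d, (W (c r) k * Θ (i r) (c r)) with hF
  -- split μ into full sum minus the diagonal correction
  have hsplit : μ i = (∑ c : Fin d → Fin C, ∑ k : Fin K, F c k)
      - (∑ c : Fin d → Fin C, ∑ k : Fin K,
          if (C ≤ (k : ℕ) ∧ ∀ r s : Fin d, c r = c s) then F c k else 0) := by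
    rw [hμ, ← Finset.sum_sub_distrib]
    refine Finset.sum_congr rfl fun c _ => ?_
    rw [← Finset.sum_sub_distrib]
    refine Finset.sum_congr rfl fun k _ => ?_
    by_cases h : (k : ℕ) < C ∨ ∃ r s : Fin d, c r ≠ c s
    · rw [if_pos h, if_neg, sub_zero]
      rintro ⟨h1, h2⟩
      rcases h with h | ⟨r, s, hrs⟩
      · omega
      · exact hrs (h2 r s)
    · rw [if_neg h, if_pos, sub_self]
      push_neg at h
      exact ⟨h.1, h.2⟩
  -- the full sum equals the unmodified CP form
  have hfull : (∑ c : Fin d → Fin C, ∑ k : Fin K, F c k)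
      = ∑ k : Fin K, γ k * ∏ r : Fin d, M (i r) k := by
    rw [Finset.sum_comm]
    refine Finset.sum_congr rfl fun k _ => ?_
    have hprod : ∏ r : Fin d, M (i r) k
        = ∑ c : Fin d → Fin C, ∏ r : Fin d, (W (c r) k * Θ (i r) (c r)) := by
      simp only [hM]
      rw [Finset.prod_univ_sum]
      rw [Fintype.piFinset_univ]
      exact Finset.sum_congr rfl fun c _ =>
        Finset.prod_congr rfl fun r _ => mul_comm _ _
    rw [hprod, Finset.mul_sum]
  -- constant-tuple reindexing
  have hconst : ∀ (h : Fin C → ℝ),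
      (∑ c : Fin d → Fin C, if (∀ r s : Fin d, c r = c s) then h (c r₀) else 0)
        = ∑ c₀ : Fin C, h c₀ := by
    intro h
    rw [← Finset.sum_filter]
    refine Finset.sum_nbij' (fun c => c r₀) (fun c₀ => Function.const (Fin d) c₀)
      ?_ ?_ ?_ ?_ ?_
    · intro a _; exact Finset.mem_univ _
    · intro b _
      simp only [Finset.mem_filter, Finset.mem_univ, true_and]
      intro r s; rfl
    · intro a ha
      simp only [Finset.mem_filter, Finset.mem_univ, true_and] at ha
      funext r; exact (ha r₀ r).symm ▸ rfl
    · intro b _; rfl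
    · intro a _; rfl
  -- diagonal correction equals the γ-correction
  have hdiag : (∑ c : Fin d → Fin C, ∑ k : Fin K,
        if (C ≤ (k : ℕ) ∧ ∀ r s : Fin d, c r = c s) then F c k else 0)
      = ∑ k : Fin K, (γ k - γt k) * ∏ r : Fin d, M (i r) k := by
    have lhs_eq : (∑ c : Fin d → Fin C, ∑ k : Fin K,
          if (C ≤ (k : ℕ) ∧ ∀ r s : Fin d, c r = c s) then F c k else 0)
        = ∑ c₀ : Fin C, ∑ k ∈ Finset.univ.filter (fun k : Fin K => C ≤ (k : ℕ)),
            γ k * ((W c₀ k) ^ d * ∏ r : Fin d, Θ (i r) c₀) := by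
      rw [← hconst (fun c₀ => ∑ k ∈ Finset.univ.filter (fun k : Fin K => C ≤ (k : ℕ)),
        γ k * ((W c₀ k) ^ d * ∏ r : Fin d, Θ (i r) c₀))]
      refine Finset.sum_congr rfl fun c _ => ?_
      by_cases hcc : ∀ r s : Fin d, c r = c s
      · rw [if_pos hcc, Finset.sum_filter]
        refine Finset.sum_congr rfl fun k _ => ?_
        by_cases hk : C ≤ (k : ℕ)
        · rw [if_pos ⟨hk, hcc⟩, if_pos hk]
          have hp : ∏ r : Fin d, (W (c r) k * Θ (i r) (c r))
              = (W (c r₀) k) ^ d * ∏ r : Fin d, Θ (i r) (c r₀) := by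
            calc ∏ r : Fin d, (W (c r) k * Θ (i r) (c r))
                = ∏ r : Fin d, (W (c r₀) k * Θ (i r) (c r₀)) :=
                  Finset.prod_congr rfl fun r _ => by rw [hcc r r₀]
              _ = (∏ r : Fin d, W (c r₀) k) * ∏ r : Fin d, Θ (i r) (c r₀) :=
                  Finset.prod_mul_distrib
              _ = (W (c r₀) k) ^ d * ∏ r : Fin d, Θ (i r) (c r₀) := by
                  rw [Finset.prod_const, Finset.card_univ, Fintype.card_fin]
          show γ k * (∏ r : Fin d, (W (c r) k * Θ (i r) (c r))) = _
          rw [hp]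
        · have h1 : ¬ (C ≤ (k : ℕ) ∧ ∀ r s : Fin d, c r = c s) := fun h => hk h.1
          rw [if_neg h1, if_neg hk]
      · rw [if_neg hcc]
        refine Finset.sum_eq_zero fun k _ => ?_
        have h1 : ¬ (C ≤ (k : ℕ) ∧ ∀ r s : Fin d, c r = c s) := fun h => hcc h.2
        rw [if_neg h1]
    have rhs_eq : (∑ k : Fin K, (γ k - γt k) * ∏ r : Fin d, M (i r) k)
        = ∑ c₀ : Fin C, ∑ k ∈ Finset.univ.filter (fun k : Fin K => C ≤ (k : ℕ)),
            γ k * ((W c₀ k) ^ d * ∏ r : Fin d, Θ (i r) c₀) := by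
      rw [← aux_dite_sum_fin hCK (fun c₀ => ∑ k ∈ Finset.univ.filter
        (fun k : Fin K => C ≤ (k : ℕ)), γ k * ((W c₀ k) ^ d * ∏ r : Fin d, Θ (i r) c₀))]
      refine Finset.sum_congr rfl fun k _ => ?_
      rw [hγt k]
      by_cases hk : (k : ℕ) < C
      · rw [dif_pos hk, dif_pos hk]
        have hprodM : ∏ r : Fin d, M (i r) k = ∏ r : Fin d, Θ (i r) ⟨(k : ℕ), hk⟩ :=
          Finset.prod_congr rfl fun r _ => hMsmall _ _ hk
        rw [hprodM]
        ring_nf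
        rw [Finset.sum_mul]
        refine Finset.sum_congr rfl fun k' _ => ?_
        ring
      · rw [dif_neg hk, dif_neg hk, sub_self, zero_mul]
    rw [lhs_eq, rhs_eq]
  rw [hsplit, hfull, hdiag]
  rw [← Finset.sum_sub_distrib]
  refine Finset.sum_congr rfl fun k _ => ?_
  ring
end

section
/- Let N, C, K be positive integers and D ≥ 2. Let Θ : Fin N → Fin C → ℝ with column sums ψ_c := Σ_i Θ i c > 0 for all c, let W : Fin C → Fin K → ℝ with ψ_k := Σ_c W c k * ψ_c > 0 for all k, and let γ : Fin K → ℝ for each order d ∈ {2,…,D} (write γ_k^(d)). Define Θ̃ i c = Θ i c / ψ_c, W̃ c k = W c k * ψ_c / ψ_k, and γ̃_k^(d) = γ_k^(d) * (ψ_k)^d. Then (i) every column of Θ̃ sums to 1 and every column of W̃ sums to 1, and (ii) for every d ∈ {2,…,D} and every tuple i : Fin d → Fin N, Σ_{k} γ̃_k^(d) * ∏_{r : Fin d} (Σ_c W̃ c k * Θ̃ (i r) c) = Σ_{k} γ_k^(d) * ∏_{r : Fin d} (Σ_c W c k * Θ (i r) c). -/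
/-- The post-training transformation normalizes the columns of `Θ` and `W`
while leaving every rate tensor `μ^(d)` for `d ∈ {2,…,D}` unchanged. -/
theorem post_training_transformation
    (N C K D : ℕ) (hN : 0 < N) (hC : 0 < C) (hK : 0 < K) (hD : 2 ≤ D)
    (Θ : Fin N → Fin C → ℝ) (W : Fin C → Fin K → ℝ)
    (γ : ℕ → Fin K → ℝ)
    (ψc : Fin C → ℝ) (hψc : ∀ c, ψc c = ∑ i : Fin N, Θ i c)
    (hψcpos : ∀ c, 0 < ψc c)
    (ψk : Fin K → ℝ) (hψk : ∀ k, ψk k = ∑ c : Fin C, W c k * ψc c)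
    (hψkpos : ∀ k, 0 < ψk k)
    (Θt : Fin N → Fin C → ℝ) (hΘt : ∀ i c, Θt i c = Θ i c / ψc c)
    (Wt : Fin C → Fin K → ℝ) (hWt : ∀ c k, Wt c k = W c k * ψc c / ψk k)
    (γt : ℕ → Fin K → ℝ) (hγt : ∀ d k, γt d k = γ d k * (ψk k) ^ d) :
    ((∀ c : Fin C, ∑ i : Fin N, Θt i c = 1) ∧
      (∀ k : Fin K, ∑ c : Fin C, Wt c k = 1)) ∧
    (∀ d : ℕ, 2 ≤ d → d ≤ D → ∀ i : Fin d → Fin N,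
      ∑ k : Fin K, γt d k * ∏ r : Fin d, (∑ c : Fin C, Wt c k * Θt (i r) c)
        = ∑ k : Fin K, γ d k * ∏ r : Fin d, (∑ c : Fin C, W c k * Θ (i r) c)) := by

  refine ⟨⟨?_, ?_⟩, ?_⟩
  · intro c
    simp only [hΘt]
    rw [← Finset.sum_div, ← hψc c, div_self (hψcpos c).ne']
  · intro k
    simp only [hWt]
    rw [← Finset.sum_div, ← hψk k, div_self (hψkpos k).ne']
  · intro d _ _ i
    apply Finset.sum_congr rfl
    intro k _
    have hinner : ∀ r : Fin d,
        (∑ c : Fin C, Wt c k * Θt (i r) c)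
          = (∑ c : Fin C, W c k * Θ (i r) c) / ψk k := by
      intro r
      rw [Finset.sum_div]
      apply Finset.sum_congr rfl
      intro c _
      rw [hWt, hΘt]
      field_simp [(hψcpos c).ne', (hψkpos k).ne']
    simp only [hinner]
    rw [Finset.prod_div_distrib, Finset.prod_const, Finset.card_univ,
      Fintype.card_fin, hγt, mul_assoc, mul_div_assoc',
      mul_div_cancel_left₀ _ (pow_ne_zero d (hψkpos k).ne')]
end
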